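/- Let τ : W → X, φ : X → Y, ψ : Y → Z be wiring diagrams. Both composites (ψ ∘ φ) ∘ τ and ψ ∘ (φ ∘ τ) are wiring diagrams W → Z whose demand and supply wire sets are Out Z ⊔ In W ⊔ D_τ ⊔ D_φ ⊔ D_ψ and In Z ⊔ Out W ⊔ D_τ ⊔ D_φ ⊔ D_ψ respectively (up to the canonical associativity bijections of disjoint unions), and under these canonical bijections their supplier assignments are equal: s_{(ψ∘φ)∘τ} = s_{ψ∘(φ∘τ)}. -/

import Mathlib

/-! Both bracketings resolve a demand by the same chase: follow `s_ψ`, then `s_φ`, then `s_τ`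
until an external wire or a delay node is reached. Up to reassociating the delay nodes this
amounts to three identities between the maps `f` and `h` of the two bracketings:
`f_{ψφ,τ} ∘ f_{ψ,φ} = f_{ψ,φτ}`, `f_{ψφ,τ} ∘ h_{ψ,φ} = h_{ψ,φτ} ∘ f_{φ,τ}` and
`h_{ψφ,τ} = h_{ψ,φτ} ∘ h_{φ,τ}`, from which both supplier assignments are assembled alike. -/

universe u

variable {InW OutW InX OutX InY OutY InZ OutZ Dτ Dφ Dψ : Type u}

/-- The map `f_{ψ,φ} : Sup(ψ) → Sup(ψ∘φ)`, the identity on `In Z` and `D_ψ`, and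
equal to `s_φ|_{Out Y}` (landing in `Out X ⊔ D_φ` by non-instantaneity, encoded by
`sφOut`) on `Out Y`. -/
def fMap (sφOut : OutY → OutX ⊕ Dφ) :
    InZ ⊕ OutY ⊕ Dψ → InZ ⊕ OutX ⊕ Dφ ⊕ Dψ
  | Sum.inl z => Sum.inl z
  | Sum.inr (Sum.inl o) =>
      match sφOut o with
      | Sum.inl x => Sum.inr (Sum.inl x)
      | Sum.inr d => Sum.inr (Sum.inr (Sum.inl d))
  | Sum.inr (Sum.inr d) => Sum.inr (Sum.inr (Sum.inr d))

/-- The map `h_{ψ,φ} : Sup(φ) → Sup(ψ∘φ)`, equal to `f_{ψ,φ} ∘ s_ψ|_{In Y}` on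
`In Y` and the identity on `Out X` and `D_φ`. -/
def hMap (sψ : OutZ ⊕ InY ⊕ Dψ → InZ ⊕ OutY ⊕ Dψ) (sφOut : OutY → OutX ⊕ Dφ) :
    InY ⊕ OutX ⊕ Dφ → InZ ⊕ OutX ⊕ Dφ ⊕ Dψ
  | Sum.inl i => fMap sφOut (sψ (Sum.inr (Sum.inl i)))
  | Sum.inr (Sum.inl x) => Sum.inr (Sum.inl x)
  | Sum.inr (Sum.inr d) => Sum.inr (Sum.inr (Sum.inl d))

/-- The supplier assignment of the composite wiring diagram `ψ ∘ φ`, with delay set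
`D_φ ⊔ D_ψ`: it equals `h_{ψ,φ} ∘ s_φ` on `In X ⊔ D_φ` and `f_{ψ,φ} ∘ s_ψ` on
`Out Z ⊔ D_ψ`. -/
def compS (sφ : OutY ⊕ InX ⊕ Dφ → InY ⊕ OutX ⊕ Dφ)
    (sψ : OutZ ⊕ InY ⊕ Dψ → InZ ⊕ OutY ⊕ Dψ) (sφOut : OutY → OutX ⊕ Dφ) :
    OutZ ⊕ InX ⊕ Dφ ⊕ Dψ → InZ ⊕ OutX ⊕ Dφ ⊕ Dψ
  | Sum.inl z => fMap sφOut (sψ (Sum.inl z))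
  | Sum.inr (Sum.inl i) => hMap sψ sφOut (sφ (Sum.inr (Sum.inl i)))
  | Sum.inr (Sum.inr (Sum.inl d)) => hMap sψ sφOut (sφ (Sum.inr (Sum.inr d)))
  | Sum.inr (Sum.inr (Sum.inr d)) => fMap sφOut (sψ (Sum.inr (Sum.inr d)))

/-- The restriction of `f_{ψ,φ}` to `Out Y ⊔ D_ψ`, landing in the internal supplies
`Out X ⊔ D_φ ⊔ D_ψ` of the composite. -/
def fMapOut (sφOut : OutY → OutX ⊕ Dφ) : OutY ⊕ Dψ → OutX ⊕ Dφ ⊕ Dψ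
  | Sum.inl o =>
      match sφOut o with
      | Sum.inl x => Sum.inl x
      | Sum.inr d => Sum.inr (Sum.inl d)
  | Sum.inr d => Sum.inr (Sum.inr d)

/-- The non-instantaneity witness for the composite `ψ ∘ φ`. -/
def compSOut (sψOut : OutZ → OutY ⊕ Dψ) (sφOut : OutY → OutX ⊕ Dφ) :
    OutZ → OutX ⊕ Dφ ⊕ Dψ :=
  fun z => fMapOut sφOut (sψOut z)

/-- The canonical associativity bijection on delay nodes. -/
def reD : Dτ ⊕ Dφ ⊕ Dψ → (Dτ ⊕ Dφ) ⊕ Dψ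
  | Sum.inl d => Sum.inl (Sum.inl d)
  | Sum.inr (Sum.inl d) => Sum.inl (Sum.inr d)
  | Sum.inr (Sum.inr d) => Sum.inr d

section

variable (sτ : OutX ⊕ InW ⊕ Dτ → InX ⊕ OutW ⊕ Dτ) (sτOut : OutX → OutW ⊕ Dτ)
  (sφ : OutY ⊕ InX ⊕ Dφ → InY ⊕ OutX ⊕ Dφ) (sφOut : OutY → OutX ⊕ Dφ)
  (sψ : OutZ ⊕ InY ⊕ Dψ → InZ ⊕ OutY ⊕ Dψ) (sψOut : OutZ → OutY ⊕ Dψ)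

theorem fMap_inr (o : OutY ⊕ Dψ) :
    (fMap sφOut (Sum.inr o) : InZ ⊕ OutX ⊕ Dφ ⊕ Dψ) = Sum.inr (fMapOut sφOut o) := by
  rcases o with y | d
  · simp only [fMap, fMapOut]
    split <;> rfl
  · rfl

theorem compS_inl (hψ : ∀ z : OutZ, sψ (Sum.inl z) = Sum.inr (sψOut z)) (z : OutZ) :
    compS sφ sψ sφOut (Sum.inl z) = Sum.inr (compSOut sψOut sφOut z) := by
  rw [compS, hψ, fMap_inr, compSOut]

theorem fMap_comp_fMap :
    Sum.map id (Sum.map id reD) ∘ fMap sτOut ∘ fMap sφOut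
      = (fMap (compSOut sφOut sτOut) : InZ ⊕ OutY ⊕ Dψ → _) := by
  funext a
  rcases a with z | y | d
  · rfl
  · simp only [Function.comp_apply, fMap, compSOut, fMapOut]
    rcases sφOut y with x | d
    · simp only
      rcases sτOut x with w | d <;> rfl
    · rfl
  · rfl

theorem fMap_comp_hMap :
    Sum.map id (Sum.map id reD) ∘ fMap sτOut ∘ hMap sψ sφOut
      = hMap sψ (compSOut sφOut sτOut) ∘ fMap sτOut := by
  funext a
  rcases a with y | x | d
  · exact congrFun (fMap_comp_fMap sτOut sφOut) _
  · simp only [Function.comp_apply, fMap, hMap]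
    rcases sτOut x with w | d <;> rfl
  · rfl

theorem hMap_compS :
    Sum.map id (Sum.map id reD) ∘ hMap (compS sφ sψ sφOut) sτOut
      = hMap sψ (compSOut sφOut sτOut) ∘ hMap sφ sτOut := by
  funext a
  rcases a with x | w | d
  · exact congrFun (fMap_comp_hMap sτOut sφOut sψ) _
  · rfl
  · rfl

theorem compS_assoc :
    Sum.map id (Sum.map id reD) ∘ compS sτ (compS sφ sψ sφOut) sτOut
      = compS (compS sτ sφ sτOut) sψ (compSOut sφOut sτOut) ∘
          Sum.map id (Sum.map id reD) := by
  funext a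
  rcases a with z | w | dτ | dφ | dψ
  · exact congrFun (fMap_comp_fMap sτOut sφOut) _
  · exact congrFun (hMap_compS sτOut sφ sφOut sψ) _
  · exact congrFun (hMap_compS sτOut sφ sφOut sψ) _
  · exact congrFun (fMap_comp_hMap sτOut sφOut sψ) _
  · exact congrFun (fMap_comp_fMap sτOut sφOut) _

end

theorem comp_assoc_supplier_general
    (sτ : OutX ⊕ InW ⊕ Dτ → InX ⊕ OutW ⊕ Dτ)
    (sτOut : OutX → OutW ⊕ Dτ)
    (sφ : OutY ⊕ InX ⊕ Dφ → InY ⊕ OutX ⊕ Dφ)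
    (sφOut : OutY → OutX ⊕ Dφ)
    (sψ : OutZ ⊕ InY ⊕ Dψ → InZ ⊕ OutY ⊕ Dψ)
    (sψOut : OutZ → OutY ⊕ Dψ)
    (hψ : ∀ z : OutZ, sψ (Sum.inl z) = Sum.inr (sψOut z)) :
    -- (ψ∘φ)∘τ satisfies non-instantaneity
    (∀ z : OutZ,
      compS sτ (compS sφ sψ sφOut) sτOut (Sum.inl z)
        = Sum.inr (compSOut (compSOut sψOut sφOut) sτOut z)) ∧
    -- ψ∘(φ∘τ) satisfies non-instantaneity
    (∀ z : OutZ,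
      compS (compS sτ sφ sτOut) sψ (compSOut sφOut sτOut) (Sum.inl z)
        = Sum.inr (compSOut sψOut (compSOut sφOut sτOut) z)) ∧
    -- and the two supplier assignments agree up to the canonical reassociations
    (Sum.map id (Sum.map id reD) ∘
        compS sτ (compS sφ sψ sφOut) sτOut
      = compS (compS sτ sφ sτOut) sψ (compSOut sφOut sτOut) ∘
          Sum.map id (Sum.map id reD)) :=
  ⟨compS_inl sτ sτOut _ _ (compS_inl sφ sφOut sψ sψOut hψ),
    compS_inl _ _ sψ sψOut hψ,
    compS_assoc sτ sτOut sφ sφOut sψ⟩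

/-- **Associativity of composition of wiring diagrams.**  For wiring diagrams
`τ : W → X`, `φ : X → Y`, `ψ : Y → Z`, the composites `(ψ∘φ)∘τ` and `ψ∘(φ∘τ)` are
wiring diagrams `W → Z` (they satisfy non-instantaneity, with the indicated
witnesses), their demand and supply wire sets are
`Out Z ⊔ In W ⊔ D_τ ⊔ D_φ ⊔ D_ψ` and `In Z ⊔ Out W ⊔ D_τ ⊔ D_φ ⊔ D_ψ` up to the
canonical associativity bijections of disjoint unions, and under these canonical
bijections their supplier assignments are equal. -/
theorem comp_assoc_supplier
    [Fintype InW] [Fintype OutW] [Fintype InX] [Fintype OutX] [Fintype InY]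
    [Fintype OutY] [Fintype InZ] [Fintype OutZ]
    [Fintype Dτ] [Fintype Dφ] [Fintype Dψ]
    (sτ : OutX ⊕ InW ⊕ Dτ → InX ⊕ OutW ⊕ Dτ)
    (sτOut : OutX → OutW ⊕ Dτ)
    (hτ : ∀ x : OutX, sτ (Sum.inl x) = Sum.inr (sτOut x))
    (sφ : OutY ⊕ InX ⊕ Dφ → InY ⊕ OutX ⊕ Dφ)
    (sφOut : OutY → OutX ⊕ Dφ)
    (hφ : ∀ y : OutY, sφ (Sum.inl y) = Sum.inr (sφOut y))
    (sψ : OutZ ⊕ InY ⊕ Dψ → InZ ⊕ OutY ⊕ Dψ)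
    (sψOut : OutZ → OutY ⊕ Dψ)
    (hψ : ∀ z : OutZ, sψ (Sum.inl z) = Sum.inr (sψOut z)) :
    -- (ψ∘φ)∘τ satisfies non-instantaneity
    (∀ z : OutZ,
      compS sτ (compS sφ sψ sφOut) sτOut (Sum.inl z)
        = Sum.inr (compSOut (compSOut sψOut sφOut) sτOut z)) ∧
    -- ψ∘(φ∘τ) satisfies non-instantaneity
    (∀ z : OutZ,
      compS (compS sτ sφ sτOut) sψ (compSOut sφOut sτOut) (Sum.inl z)
        = Sum.inr (compSOut sψOut (compSOut sφOut sτOut) z)) ∧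
    -- and the two supplier assignments agree up to the canonical reassociations
    (Sum.map id (Sum.map id reD) ∘
        compS sτ (compS sφ sψ sφOut) sτOut
      = compS (compS sτ sφ sτOut) sψ (compSOut sφOut sτOut) ∘
          Sum.map id (Sum.map id reD)) :=
  comp_assoc_supplier_general sτ sτOut sφ sφOut sψ sψOut hψ
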